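/- arXiv:2108.02190 — 6 statements merged into one kernel-verified Lean document; each statement's English description precedes it below -/
import Mathlib

section
/- Let G be a countable abelian group and let E ⊆ G be an I₀ set. If S ⊆ E − E and S is a set of Bohr recurrence, then S is a set of chromatic recurrence. -/
/-!
Interpolate a colouring `f : G → Fin r`, viewed as a bounded complex function on `E`, by an
almost periodic `ψ`. Bohr recurrence of `S` yields almost periods of every trigonometric
polynomial in `S` (each character is `x ↦ e(ρ x)` for a homomorphism `ρ : G → 𝕋`), hence of `ψ`:
some `s ∈ S` with `‖ψ (g + s) - ψ g‖ ≤ 1/2` for all `g`. Writing `s = x - y` with `x, y ∈ E`,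
the integer colours `f x` and `f y` differ by at most `1/2`, so they are equal.
-/

open Pointwise

/-- `S` is a set of Bohr recurrence: for every `d`, every homomorphism `ρ : G → 𝕋^d`, and
every `ε > 0`, there is `s ∈ S` with `‖ρ(s)‖ < ε` (max over coordinates of the distance
to the nearest integer). -/
def BohrRecurrent {G : Type*} [AddCommGroup G] (S : Set G) : Prop :=
  ∀ (d : ℕ) (ρ : G →+ (Fin d → AddCircle (1 : ℝ))) (ε : ℝ), 0 < ε →
    ∃ s ∈ S, ∀ i : Fin d, ‖ρ s i‖ < ε

/-- `S` is a set of chromatic recurrence: for every `r` and every `f : G → {1,…,r}` there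
are `a, b ∈ G` with `f a = f b` and `b - a ∈ S`. -/
def ChromaticRecurrent {G : Type*} [AddCommGroup G] (S : Set G) : Prop :=
  ∀ (r : ℕ) (f : G → Fin r), ∃ a b : G, f a = f b ∧ b - a ∈ S

/-- `χ : G → ℂ` is a character: a homomorphism into the unit circle. -/
def IsChar {G : Type*} [AddCommGroup G] (χ : G → ℂ) : Prop :=
  (∀ g, ‖χ g‖ = 1) ∧ ∀ a b, χ (a + b) = χ a * χ b

/-- A trigonometric polynomial: a finite linear combination of characters. -/
def IsTrigPoly {G : Type*} [AddCommGroup G] (p : G → ℂ) : Prop :=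
  ∃ (n : ℕ) (c : Fin n → ℂ) (χ : Fin n → G → ℂ),
    (∀ i, IsChar (χ i)) ∧ ∀ g, p g = ∑ i, c i * χ i g

/-- `ψ` is almost periodic: a uniform limit of trigonometric polynomials. -/
def IsAlmostPeriodic {G : Type*} [AddCommGroup G] (ψ : G → ℂ) : Prop :=
  ∀ ε : ℝ, 0 < ε → ∃ p : G → ℂ, IsTrigPoly p ∧ ∀ g, ‖ψ g - p g‖ ≤ ε

/-- `E` is an `I₀` set: every bounded function on `E` is the restriction of an almost
periodic function on `G`. -/
def IsI0Set {G : Type*} [AddCommGroup G] (E : Set G) : Prop :=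
  ∀ f : G → ℂ, (∃ C : ℝ, ∀ x ∈ E, ‖f x‖ ≤ C) →
    ∃ ψ : G → ℂ, IsAlmostPeriodic ψ ∧ ∀ x ∈ E, ψ x = f x

/-- `B` is a Bohr neighborhood of `0`. -/
def IsBohrNhdZero {G : Type*} [AddCommGroup G] (B : Set G) : Prop :=
  ∃ (d : ℕ) (ρ : G →+ (Fin d → AddCircle (1 : ℝ))) (V : Set (Fin d → AddCircle (1 : ℝ))),
    IsOpen V ∧ (0 : Fin d → AddCircle (1 : ℝ)) ∈ V ∧ ρ ⁻¹' V ⊆ B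

/-- `Δ₂(A) = {(a-b)-(c-d) : a,b,c,d ∈ A mutually distinct}`. -/
def Delta2 {G : Type*} [AddCommGroup G] (A : Set G) : Set G :=
  {x | ∃ a b c d : G, a ∈ A ∧ b ∈ A ∧ c ∈ A ∧ d ∈ A ∧
    a ≠ b ∧ a ≠ c ∧ a ≠ d ∧ b ≠ c ∧ b ≠ d ∧ c ≠ d ∧ x = (a - b) - (c - d)}


open Complex Real

namespace AddCircle

theorem norm_toCircle_sub_one_le (x : AddCircle (1 : ℝ)) :
    ‖(toCircle x : ℂ) - 1‖ ≤ 2 * π * ‖x‖ := by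
  induction x using QuotientAddGroup.induction_on with
  | H z =>
    have hz : ((z : ℝ) : AddCircle (1 : ℝ)) = ((z - round z : ℝ) : AddCircle (1 : ℝ)) := by
      rw [QuotientAddGroup.eq]
      refine AddSubgroup.mem_zmultiples_iff.2 ⟨-round z, ?_⟩
      rw [zsmul_eq_mul, mul_one]
      push_cast
      ring
    rw [UnitAddCircle.norm_eq, hz, toCircle_apply_mk, Circle.coe_exp, mul_comm _ I]
    calc ‖exp (I * ((2 * π / 1 * (z - round z) : ℝ) : ℂ)) - 1‖
        ≤ ‖(2 * π / 1 * (z - round z) : ℝ)‖ := norm_exp_I_mul_ofReal_sub_one_le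
      _ = 2 * π * |z - round z| := by
        rw [div_one, Real.norm_eq_abs, abs_mul, abs_of_pos two_pi_pos]

end AddCircle

theorem IsChar.exists_addCircle_hom {G : Type*} [AddCommGroup G] {χ : G → ℂ} (h : IsChar χ) :
    ∃ ρ : G →+ AddCircle (1 : ℝ), ∀ g, (AddCircle.toCircle (ρ g) : ℂ) = χ g := by
  let e : G → Circle := fun g => ⟨χ g, mem_sphere_zero_iff_norm.2 (h.1 g)⟩
  let ρ : G → AddCircle (1 : ℝ) := fun g => (AddCircle.homeomorphCircle one_ne_zero).symm (e g)
  have hρ : ∀ g, AddCircle.toCircle (ρ g) = e g := fun g => by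
    rw [← AddCircle.homeomorphCircle_apply one_ne_zero, Homeomorph.apply_symm_apply]
  have hadd : ∀ a b, ρ (a + b) = ρ a + ρ b := fun a b =>
    AddCircle.injective_toCircle one_ne_zero <| by
      rw [AddCircle.toCircle_add, hρ, hρ, hρ]
      ext
      exact h.2 a b
  exact ⟨AddMonoidHom.mk' ρ hadd, fun g => congrArg Subtype.val (hρ g)⟩

section Recurrence

variable {G : Type*} [AddCommGroup G] {S : Set G}

theorem BohrRecurrent.exists_forall_norm_char_sub_one_lt (hS : BohrRecurrent S) {n : ℕ}
    {χ : Fin n → G → ℂ} (hχ : ∀ i, IsChar (χ i)) {η : ℝ} (hη : 0 < η) :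
    ∃ s ∈ S, ∀ i, ‖χ i s - 1‖ < η := by
  choose ρ hρ using fun i => (hχ i).exists_addCircle_hom
  obtain ⟨s, hsS, hs⟩ := hS n (AddMonoidHom.pi ρ) (η / (2 * π)) (by positivity)
  refine ⟨s, hsS, fun i => ?_⟩
  calc ‖χ i s - 1‖ = ‖(AddCircle.toCircle (ρ i s) : ℂ) - 1‖ := by rw [hρ]
    _ ≤ 2 * π * ‖ρ i s‖ := AddCircle.norm_toCircle_sub_one_le _
    _ < 2 * π * (η / (2 * π)) := mul_lt_mul_of_pos_left (hs i) two_pi_pos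
    _ = η := by field_simp

theorem IsTrigPoly.exists_almost_period (hS : BohrRecurrent S) {p : G → ℂ} (hp : IsTrigPoly p)
    {ε : ℝ} (hε : 0 < ε) : ∃ s ∈ S, ∀ g, ‖p (g + s) - p g‖ ≤ ε := by
  obtain ⟨n, c, χ, hχ, hp⟩ := hp
  obtain rfl : p = fun g => ∑ i, c i * χ i g := funext hp
  set M := ∑ i, ‖c i‖
  have hM : 0 ≤ M := Finset.sum_nonneg fun i _ => norm_nonneg _
  obtain ⟨s, hsS, hs⟩ := hS.exists_forall_norm_char_sub_one_lt hχ (by positivity : 0 < ε / (M + 1))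
  refine ⟨s, hsS, fun g => ?_⟩
  calc ‖∑ i, c i * χ i (g + s) - ∑ i, c i * χ i g‖
      = ‖∑ i, c i * χ i g * (χ i s - 1)‖ := by
        rw [← Finset.sum_sub_distrib]
        congr 1
        exact Finset.sum_congr rfl fun i _ => by rw [(hχ i).2]; ring
    _ ≤ ∑ i, ‖c i‖ * (ε / (M + 1)) := by
        refine (norm_sum_le _ _).trans (Finset.sum_le_sum fun i _ => ?_)
        rw [norm_mul, norm_mul, (hχ i).1, mul_one]
        exact mul_le_mul_of_nonneg_left (hs i).le (norm_nonneg _)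
    _ = M / (M + 1) * ε := by rw [← Finset.sum_mul]; ring
    _ ≤ ε := mul_le_of_le_one_left hε.le ((div_le_one (by positivity)).2 (by linarith))

theorem IsAlmostPeriodic.exists_almost_period (hS : BohrRecurrent S) {ψ : G → ℂ}
    (hψ : IsAlmostPeriodic ψ) {ε : ℝ} (hε : 0 < ε) : ∃ s ∈ S, ∀ g, ‖ψ (g + s) - ψ g‖ ≤ ε := by
  obtain ⟨p, hp, hψp⟩ := hψ (ε / 3) (by positivity)
  obtain ⟨s, hsS, hs⟩ := hp.exists_almost_period hS (by positivity : 0 < ε / 3)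
  refine ⟨s, hsS, fun g => ?_⟩
  calc ‖ψ (g + s) - ψ g‖ = ‖(ψ (g + s) - p (g + s)) + (p (g + s) - p g) - (ψ g - p g)‖ := by
        congr 1; ring
    _ ≤ ‖ψ (g + s) - p (g + s)‖ + ‖p (g + s) - p g‖ + ‖ψ g - p g‖ := norm_sub_le_of_le
        (norm_add_le _ _) le_rfl
    _ ≤ ε / 3 + ε / 3 + ε / 3 := by gcongr <;> apply_assumption
    _ = ε := by ring

end Recurrence

theorem Fin.eq_of_norm_natCast_sub_lt_one {r : ℕ} {a b : Fin r}
    (h : ‖((a : ℕ) : ℂ) - ((b : ℕ) : ℂ)‖ < 1) : a = b := by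
  have hℝ : |((a : ℕ) : ℝ) - (b : ℕ)| < 1 := by
    rwa [← Real.norm_eq_abs, ← Complex.norm_real, ofReal_sub, ofReal_natCast, ofReal_natCast]
  have hℤ : |((a : ℕ) : ℤ) - (b : ℕ)| < 1 := by exact_mod_cast hℝ
  exact Fin.ext (by have := Int.abs_lt_one_iff.1 hℤ; omega)

theorem stmt_0_general {G : Type*} [AddCommGroup G] (E S : Set G)
    (hE : IsI0Set E) (hSE : S ⊆ E - E) (hBohr : BohrRecurrent S) :
    ChromaticRecurrent S := by
  intro r f
  obtain ⟨ψ, hψ, hψf⟩ := hE (fun g => ((f g : ℕ) : ℂ))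
    ⟨r, fun x _ => by rw [Complex.norm_natCast]; exact_mod_cast (f x).isLt.le⟩
  obtain ⟨s, hsS, hs⟩ := hψ.exists_almost_period hBohr one_half_pos
  obtain ⟨x, hx, y, hy, rfl⟩ := hSE hsS
  refine ⟨y, x, Fin.eq_of_norm_natCast_sub_lt_one ?_, hsS⟩
  have hxy := hs y
  rw [add_sub_cancel, hψf x hx, hψf y hy, norm_sub_rev] at hxy
  linarith

/-- If `G` is a countable abelian group, `E ⊆ G` is an `I₀` set, `S ⊆ E - E`, and `S` is a
set of Bohr recurrence, then `S` is a set of chromatic recurrence. -/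
theorem stmt_0 {G : Type*} [AddCommGroup G] [Countable G] (E S : Set G)
    (hE : IsI0Set E) (hSE : S ⊆ E - E) (hBohr : BohrRecurrent S) :
    ChromaticRecurrent S :=
  stmt_0_general E S hE hSE hBohr
end

section
/- Let p be a prime, let 𝓕 be a collection of subsets of ℕ each having cardinality p, and let 𝓔(𝓕) := {e_F : F ∈ 𝓕} ⊆ 𝔽_p^ω. Then 𝓔(𝓕) is a set of Bohr recurrence if and only if 𝓕 is partition regular. -/
open Pointwise

/-- For a finite `F ⊆ ℕ`, `e_F := ∑_{n ∈ F} e_n` in `𝔽_p^ω = ⨁_{n ∈ ℕ} ℤ/pℤ`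
(finitely supported sequences valued in `ℤ/pℤ`). -/
noncomputable def eFp (p : ℕ) (F : Finset ℕ) : ℕ →₀ ZMod p :=
  ∑ n ∈ F, Finsupp.single n (1 : ZMod p)

/-- `𝓔_d^{(p)} = {e_F : F ⊆ ℕ, |F| = d}`. -/
def Ed (p d : ℕ) : Set (ℕ →₀ ZMod p) :=
  {x | ∃ F : Finset ℕ, F.card = d ∧ x = eFp p F}

/-- `𝓕` is partition regular: every finite coloring of `ℕ` has a monochromatic member of
`𝓕`. -/
def PartitionRegular (F : Set (Finset ℕ)) : Prop :=
  ∀ (r : ℕ) (c : ℕ → Fin r), ∃ A ∈ F, ∃ i : Fin r, ∀ n ∈ A, c n = i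

/-!
For `(⇐)`, every `ρ(e_n)` is `p`-torsion in `𝕋^d`, and there are only finitely many such points,
so `n ↦ ρ(e_n)` is a finite colouring of `ℕ`; on a monochromatic `A ∈ 𝓕` with value `v` we get
`ρ(e_A) = p • v = 0`.

For `(⇒)`, encode a colouring `c : ℕ → Fin r` by the homomorphism `e_n ↦ e_{c n}/p` into `𝕋^r`.
Its range is finite, so Bohr recurrence yields `A ∈ 𝓕` with `ρ(e_A) = 0`, i.e. every colour class
of `A` has size divisible by `p = |A|`; hence one colour class is all of `A`.
-/

open Finset

theorem BohrRecurrent.exists_map_eq_zero_of_finite_range {G : Type*} [AddCommGroup G]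
    {S : Set G} (hS : BohrRecurrent S) {d : ℕ} (ρ : G →+ (Fin d → AddCircle (1 : ℝ)))
    (hρ : (Set.range ρ).Finite) : ∃ s ∈ S, ρ s = 0 := by
  have hopen : IsOpen (Set.range ρ \ {0})ᶜ := (hρ.sdiff.isClosed).isOpen_compl
  obtain ⟨ε, hε, hball⟩ := Metric.isOpen_iff.mp hopen 0 (by simp)
  obtain ⟨s, hs, hsmall⟩ := hS d ρ ε hε
  have hmem : ρ s ∈ Metric.ball 0 ε := by
    rwa [mem_ball_zero_iff, pi_norm_lt_iff hε]
  refine ⟨s, hs, ?_⟩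
  by_contra hne
  exact hball hmem ⟨Set.mem_range_self s, hne⟩

theorem Finset.exists_forall_eq_of_card_dvd_card_fiber {α β : Type*} [DecidableEq β]
    {s : Finset α} (hs : s.Nonempty) (f : α → β) (h : ∀ b, #s ∣ #{a ∈ s | f a = b}) :
    ∃ b, ∀ a ∈ s, f a = b := by
  obtain ⟨a₀, ha₀⟩ := hs
  have hpos : 0 < #{a ∈ s | f a = f a₀} := card_pos.mpr ⟨a₀, mem_filter.mpr ⟨ha₀, rfl⟩⟩
  have hfiber : {a ∈ s | f a = f a₀} = s :=
    eq_of_subset_of_card_le (filter_subset _ _) (Nat.le_of_dvd hpos (h (f a₀)))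
  exact ⟨f a₀, filter_eq_self.mp hfiber⟩

theorem PartitionRegular.exists_forall_eq {F : Set (Finset ℕ)} (hF : PartitionRegular F)
    {α : Type*} [Finite α] (c : ℕ → α) : ∃ A ∈ F, ∃ a, ∀ n ∈ A, c n = a := by
  obtain ⟨r, ⟨e⟩⟩ := Finite.exists_equiv_fin α
  obtain ⟨A, hA, i, hi⟩ := hF r (e ∘ c)
  exact ⟨A, hA, e.symm i, fun n hn => e.eq_symm_apply.mpr (hi n hn)⟩

theorem finite_setOf_nsmul_eq_zero_pi {ι : Type*} [Finite ι] (T : ℝ) {n : ℕ} (hn : 0 < n) :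
    {v : ι → AddCircle T | n • v = 0}.Finite := by
  refine (Set.Finite.pi' fun _ => AddCircle.finite_torsion T hn).subset fun v hv i => ?_
  simpa using congrFun hv i

noncomputable def colorCount (p : ℕ) {ι : Type*} [DecidableEq ι] (c : ℕ → ι) :
    (ℕ →₀ ZMod p) →+ (ι → ZMod p) :=
  Finsupp.liftAddHom fun n => AddMonoidHom.single (fun _ => ZMod p) (c n)

theorem colorCount_eFp (p : ℕ) {ι : Type*} [DecidableEq ι] (c : ℕ → ι) (A : Finset ℕ) (i : ι) :
    colorCount p c (eFp p A) i = #{n ∈ A | c n = i} := by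
  simp [colorCount, eFp, map_sum, Pi.single_apply, sum_boole, eq_comm]

theorem map_eFp_of_forall_eq {p : ℕ} {H : Type*} [AddCommMonoid H] (ρ : (ℕ →₀ ZMod p) →+ H)
    {A : Finset ℕ} {v : H} (h : ∀ n ∈ A, ρ (Finsupp.single n 1) = v) :
    ρ (eFp p A) = #A • v := by
  rw [eFp, map_sum, sum_congr rfl h, sum_const]

/-- For a prime `p` and a collection `𝓕` of `p`-element subsets of `ℕ`, the set
`𝓔(𝓕) = {e_F : F ∈ 𝓕} ⊆ 𝔽_p^ω` is Bohr recurrent iff `𝓕` is partition regular. -/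
theorem stmt_11 (p : ℕ) (hp : p.Prime) (F : Set (Finset ℕ)) (hF : ∀ A ∈ F, A.card = p) :
    BohrRecurrent {x : ℕ →₀ ZMod p | ∃ A ∈ F, x = eFp p A} ↔ PartitionRegular F := by
  have : NeZero p := ⟨hp.ne_zero⟩
  constructor
  · intro hB r c
    let ρ := (ZMod.toAddCircle.compLeft (Fin r)).comp (colorCount p c)
    have hρ : (Set.range ρ).Finite :=
      (Set.finite_range _).subset
        (Set.range_comp_subset_range (colorCount p c) (ZMod.toAddCircle.compLeft (Fin r)))
    obtain ⟨_, ⟨A, hA, rfl⟩, hA0⟩ := hB.exists_map_eq_zero_of_finite_range ρ hρ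
    have hcount : ∀ i, #A ∣ #{n ∈ A | c n = i} := fun i => by
      have h := congrFun hA0 i
      simp only [ρ, AddMonoidHom.comp_apply, AddMonoidHom.compLeft_apply, Function.comp_apply,
        Pi.zero_apply, ZMod.toAddCircle_eq_zero, colorCount_eFp] at h
      rwa [hF A hA, ← ZMod.natCast_eq_zero_iff]
    have hne : A.Nonempty := card_pos.mp ((hF A hA).symm ▸ hp.pos)
    exact ⟨A, hA, exists_forall_eq_of_card_dvd_card_fiber hne c hcount⟩
  · intro hPR d ρ ε hε
    let T := {v : Fin d → AddCircle (1 : ℝ) | p • v = 0}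
    have : Finite T := (finite_setOf_nsmul_eq_zero_pi 1 hp.pos).to_subtype
    let color : ℕ → T := fun n =>
      ⟨ρ (Finsupp.single n 1), by
        rw [Set.mem_ofPred_eq, ← map_nsmul, ZModModule.char_nsmul_eq_zero, map_zero]⟩
    obtain ⟨A, hA, v, hv⟩ := hPR.exists_forall_eq color
    have hρA : ρ (eFp p A) = 0 := by
      rw [map_eFp_of_forall_eq ρ fun n hn => congrArg Subtype.val (hv n hn), hF A hA]
      exact v.2
    exact ⟨_, ⟨A, hA, rfl⟩, fun i => by simpa [hρA] using hε⟩
end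

section
/- Fix an odd prime p. Suppose that for every collection 𝓕 of p-element subsets of ℕ such that the p-uniform hypergraph with vertex set ℕ and edge set 𝓕 has infinite chromatic number, the Cayley graph Cay(𝔽_p^ω, 𝓔(𝓕)) has infinite chromatic number. Then every subset of 𝔽_p^ω which is a set of Bohr recurrence is a set of chromatic recurrence. -/
open Pointwise

/-- The Cayley graph on `G` determined by `S`: distinct `g, g'` are adjacent iff
`g - g' ∈ S` or `g' - g ∈ S`. -/
def cayleyGraph {G : Type*} [AddCommGroup G] (S : Set G) : SimpleGraph G :=
  SimpleGraph.fromRel fun g g' => g - g' ∈ S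


/-!
If `S` is Bohr recurrent but `f : 𝔽_p^ω → Fin r` has no monochromatic pair with difference in
`S`, enumerate `𝔽_p^ω` as `β : ℕ → 𝔽_p^ω` with infinite fibres and let `𝓕` be the family of
`p`-sets `A ⊆ ℕ` with `∑_{n ∈ A} β n ∈ S`. Then `f` composed with the linear map `e_n ↦ β n` is a
proper `r`-colouring of `Cay(𝔽_p^ω, 𝓔(𝓕))`, so by hypothesis some finite colouring of `ℕ` has no
monochromatic edge in `𝓕`.

This is impossible because of a Bogolyubov-type fact, which needs `p ≥ 3`: for every `k`-colouring
of `𝔽_p^ω` some colour class `C` has `p`-fold sumset `p • C` containing the kernel of a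
homomorphism to `𝔽_p^{4k²}`. Bohr recurrence puts some `s ∈ S` in that kernel, and lifting a
representation `s = c₁ + ⋯ + c_p` along `β` to distinct integers of one colour gives a monochromatic
edge. On a finite `𝔽_p`-space the fact follows from a density increment argument: if every
nontrivial Fourier coefficient of `A` (of density at least `α`) is below `α²|W|/2`, counting the
solutions of `x = a₁ + ⋯ + a_p` shows `p • A = W`; otherwise `A` has relative density larger by
`α²/4` on a coset of a hyperplane, and one recurses into that hyperplane. The statement for `𝔽_p^ω`
follows by taking an ultrafilter limit of the maps obtained on the finite subspaces
`supported (Iio N)`.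
-/

namespace BohrChromatic

open Finset

lemma _root_.AddChar.map_sum_eq_prod {A M ι : Type*} [AddCommMonoid A] [CommMonoid M]
    (ψ : AddChar A M) (s : Finset ι) (f : ι → A) : ψ (∑ i ∈ s, f i) = ∏ i ∈ s, ψ (f i) := by
  classical
  induction s using Finset.induction_on with
  | empty => simp
  | insert i s hi ih => rw [sum_insert hi, prod_insert hi, AddChar.map_add_eq_mul, ih]

lemma exists_le_of_sum_eq_zero {ι : Type*} [Fintype ι] [Nonempty ι] {b : ι → ℝ}
    (hb : ∑ i, b i = 0) : ∃ i, (∑ j, |b j|) / (2 * Fintype.card ι) ≤ b i := by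
  obtain ⟨i, -, hi⟩ := exists_max_image univ b univ_nonempty
  refine ⟨i, ?_⟩
  have hbi : 0 ≤ b i := by
    by_contra! h
    have := sum_lt_sum_of_nonempty univ_nonempty fun j _ => (hi j (mem_univ _)).trans_lt h
    simp [hb] at this
  have habs : ∑ j, |b j| = ∑ j, (2 * max (b j) 0 - b j) := sum_congr rfl fun j _ => by
    rcases le_total 0 (b j) with h | h
    · rw [abs_of_nonneg h, max_eq_left h]; ring
    · rw [abs_of_nonpos h, max_eq_right h]; ring
  have hpos : ∑ j, max (b j) 0 ≤ Fintype.card ι * b i := by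
    calc _ ≤ ∑ _j : ι, b i := sum_le_sum fun j _ => max_le (hi j (mem_univ _)) hbi
      _ = _ := by simp
  rw [div_le_iff₀ (by positivity), habs, sum_sub_distrib, ← mul_sum, hb]
  linarith

lemma half_sq_mul_pow_mul_lt_pow {n : ℕ} (hn : 3 ≤ n) {α w a : ℝ} (hα0 : 0 < α) (hα1 : α ≤ 1)
    (hw : 0 < w) (hαw : α * w ≤ a) : (α ^ 2 / 2 * w) ^ (n - 2) * (w * a) < a ^ n := by
  obtain ⟨m, rfl⟩ : ∃ m, n = m + 3 := ⟨n - 3, by omega⟩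
  have ha : 0 < a := (mul_pos hα0 hw).trans_le hαw
  have hαw' : α ^ 2 / 2 * w ≤ a := by nlinarith
  have hsq : α ^ 2 / 2 * w * (w * a) ≤ a ^ 3 / 2 := by
    nlinarith [mul_le_mul hαw hαw (by positivity) ha.le]
  calc (α ^ 2 / 2 * w) ^ (m + 3 - 2) * (w * a)
      = (α ^ 2 / 2 * w) ^ m * (α ^ 2 / 2 * w * (w * a)) := by
        rw [show m + 3 - 2 = m + 1 by omega, pow_succ, mul_assoc]
    _ ≤ a ^ m * (a ^ 3 / 2) :=
        mul_le_mul (pow_le_pow_left₀ (by positivity) hαw' m) hsq (by positivity) (by positivity)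
    _ < a ^ (m + 3) := by rw [pow_add]; nlinarith [pow_pos ha m, pow_pos ha 3]

lemma _root_.AddCircle.eq_zero_of_nsmul_eq_zero_of_norm_lt {n : ℕ} (hn : 0 < n)
    {u : AddCircle (1 : ℝ)} (hu : n • u = 0) (hnorm : ‖u‖ < 1 / n) : u = 0 := by
  by_contra hu0
  have hord := AddCircle.le_add_order_smul_norm_of_isOfFinAddOrder
    (isOfFinAddOrder_iff_nsmul_eq_zero.mpr ⟨n, hn, hu⟩) hu0
  have hle : (addOrderOf u : ℝ) ≤ n := by exact_mod_cast addOrderOf_le_of_nsmul_eq_zero hn hu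
  rw [nsmul_eq_mul] at hord
  rw [lt_div_iff₀ (by positivity)] at hnorm
  nlinarith [norm_nonneg u]

lemma _root_.Ultrafilter.exists_eventually_eq {ι β : Type*} [Finite β] (𝒰 : Ultrafilter ι)
    (f : ι → β) : ∃ b, ∀ᶠ i in 𝒰, f i = b := by
  obtain ⟨b, hb⟩ := (𝒰.map f).eq_pure_of_finite
  refine ⟨b, (Ultrafilter.mem_map (s := {b})).mp ?_⟩
  rw [hb]
  exact Ultrafilter.mem_pure.mpr rfl

lemma exists_addMonoidHom_eventually_eq {ι G H : Type*} [AddZeroClass G] [AddZeroClass H]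
    [Finite H] (𝒰 : Ultrafilter ι) (Φ : ι → G →+ H) :
    ∃ Ψ : G →+ H, ∀ g, ∀ᶠ i in 𝒰, Φ i g = Ψ g := by
  choose Ψ hΨ using fun g => 𝒰.exists_eventually_eq fun i => Φ i g
  refine ⟨{ toFun := Ψ, map_zero' := ?_, map_add' := fun g h => ?_ }, hΨ⟩
  · obtain ⟨i, hi⟩ := (hΨ 0).exists
    rw [← hi, map_zero]
  · obtain ⟨i, hg, hh, hgh⟩ := ((hΨ g).and ((hΨ h).and (hΨ (g + h)))).exists
    rw [← hg, ← hh, ← hgh, map_add]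

lemma exists_infinite_fibers (G : Type*) [Countable G] [Nonempty G] :
    ∃ β : ℕ → G, ∀ g, {n | β n = g}.Infinite := by
  obtain ⟨σ, hσ⟩ := exists_surjective_nat G
  refine ⟨fun n => σ n.unpair.1, fun g => ?_⟩
  obtain ⟨a, rfl⟩ := hσ g
  exact Set.infinite_of_injective_forall_mem (f := Nat.pair a)
    (fun b b' h => (Nat.pair_eq_pair.mp h).2) fun b => by simp

lemma exists_injective_forall_mem {α : Type*} :
    ∀ {m : ℕ} (s : Fin m → Set α), (∀ j, (s j).Infinite) →
      ∃ f : Fin m → α, Function.Injective f ∧ ∀ j, f j ∈ s j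
  | 0, _, _ => ⟨Fin.elim0, fun a => a.elim0, fun j => j.elim0⟩
  | _ + 1, s, hs => by
    obtain ⟨f, hf, hfs⟩ := exists_injective_forall_mem (fun j => s j.succ) fun j => hs _
    obtain ⟨a, has, haf⟩ := ((hs 0).sdiff (Set.finite_range f)).nonempty
    exact ⟨Fin.cons a f, Fin.cons_injective_iff.mpr ⟨haf, hf⟩, Fin.cases has hfs⟩

section Fourier

variable {p : ℕ} [Fact p.Prime] {W : Type*} [AddCommGroup W] [Module (ZMod p) W]

lemma stdAddChar_ne_one : (ZMod.stdAddChar : AddChar (ZMod p) ℂ) ≠ 1 :=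
  AddChar.ne_one_iff.mpr ⟨1, fun h =>
    one_ne_zero (ZMod.injective_stdAddChar (h.trans (AddChar.map_zero_eq_one _).symm))⟩

/-- The Fourier coefficient of the indicator of `A` at the character `x ↦ e(ψ x)`. -/
noncomputable def charSum (A : Finset W) (ψ : Module.Dual (ZMod p) W) : ℂ :=
  ∑ a ∈ A, ZMod.stdAddChar (ψ a)

lemma charSum_zero (A : Finset W) : charSum A (0 : Module.Dual (ZMod p) W) = #A := by
  simp [charSum]

lemma exists_card_fiber_ge (A : Finset W) (ψ : Module.Dual (ZMod p) W) :
    ∃ t : ZMod p, #A / p + ‖charSum A ψ‖ / (2 * p) ≤ #{a ∈ A | ψ a = t} := by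
  classical
  set b : ZMod p → ℝ := fun t => #{a ∈ A | ψ a = t} - #A / p
  have hp : (p : ℝ) ≠ 0 := Nat.cast_ne_zero.mpr (Fact.out : p.Prime).ne_zero
  have hfib : ∑ t, (#{a ∈ A | ψ a = t} : ℝ) = #A := by
    exact_mod_cast (card_eq_sum_card_fiberwise fun a _ => mem_univ (ψ a)).symm
  have hb : ∑ t, b t = 0 := by
    simp only [b, sum_sub_distrib, hfib, sum_const, card_univ, ZMod.card, nsmul_eq_mul]
    field_simp
    ring
  have hS : charSum A ψ = ∑ t, (b t : ℂ) * ZMod.stdAddChar t := by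
    have hχ : ∑ t : ZMod p, ZMod.stdAddChar t = (0 : ℂ) :=
      AddChar.sum_eq_zero_of_ne_one stdAddChar_ne_one
    simp only [b, Complex.ofReal_sub, Complex.ofReal_natCast, Complex.ofReal_div, sub_mul,
      sum_sub_distrib, ← mul_sum, hχ, mul_zero, sub_zero, charSum]
    rw [← sum_fiberwise A ψ]
    refine sum_congr rfl fun t _ => ?_
    rw [sum_congr rfl fun a ha => by rw [(mem_filter.mp ha).2], sum_const, nsmul_eq_mul]
  have hnorm : ‖charSum A ψ‖ ≤ ∑ t, |b t| := by
    rw [hS]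
    refine norm_sum_le_of_le _ fun t _ => ?_
    rw [norm_mul, AddChar.norm_apply, mul_one, Complex.norm_real, Real.norm_eq_abs]
  obtain ⟨t, ht⟩ := exists_le_of_sum_eq_zero hb
  rw [ZMod.card] at ht
  refine ⟨t, ?_⟩
  have := div_le_div_of_nonneg_right hnorm (by positivity : (0 : ℝ) ≤ 2 * p)
  simp only [b] at ht
  linarith

lemma card_ker_mul_eq {ψ : Module.Dual (ZMod p) W} (hψ : ψ ≠ 0) :
    Nat.card (LinearMap.ker ψ) * p = Nat.card W := by
  rw [Submodule.card_eq_card_quotient_mul_card (LinearMap.ker ψ),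
    Nat.card_congr (ψ.quotKerEquivOfSurjective (LinearMap.surjective_of_ne_zero hψ)).toEquiv,
    Nat.card_zmod]

lemma exists_ker_subset_nsmul_of_hyperplane {A : Set W} {ψ : Module.Dual (ZMod p) W} {u : W} {T : ℕ}
    {φ : LinearMap.ker ψ →ₗ[ZMod p] (Fin T → ZMod p)}
    (hφ : (LinearMap.ker φ : Set (LinearMap.ker ψ)) ⊆ p • {k : LinearMap.ker ψ | (k : W) + u ∈ A}) :
    ∃ φ' : W →ₗ[ZMod p] (Fin (T + 1) → ZMod p), (LinearMap.ker φ' : Set W) ⊆ p • A := by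
  obtain ⟨π, hπ⟩ := (LinearMap.ker ψ).subtype.exists_leftInverse_of_injective
    (Submodule.ker_subtype _)
  refine ⟨LinearMap.pi (Fin.cons ψ fun j => LinearMap.proj j ∘ₗ φ ∘ₗ π), fun x hx => ?_⟩
  have hx := LinearMap.mem_ker.mp hx
  have hxψ : ψ x = 0 := by simpa using congr_fun hx 0
  have hxφ : φ (π x) = 0 := funext fun j => by simpa using congr_fun hx j.succ
  have hπx : π x = ⟨x, hxψ⟩ := LinearMap.congr_fun hπ ⟨x, hxψ⟩
  have hx' : x ∈ p • ((LinearMap.ker ψ).subtype '' {k | (k : W) + u ∈ A}) := by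
    rw [← Set.image_nsmul]
    refine ⟨⟨x, hxψ⟩, hφ ?_, rfl⟩
    rw [SetLike.mem_coe, LinearMap.mem_ker, ← hπx, hxφ]
  have himage : (LinearMap.ker ψ).subtype '' {k | (k : W) + u ∈ A} ⊆ A + {-u} := by
    rintro _ ⟨k, hk, rfl⟩
    exact ⟨_, hk, -u, rfl, by simp⟩
  have htranslate : p • (A + {-u}) = p • A := by
    rw [nsmul_add, Set.nsmul_singleton, ZModModule.char_nsmul_eq_zero, Set.singleton_zero,
      add_zero]
  exact htranslate ▸ Set.nsmul_subset_nsmul_left himage hx'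

lemma card_filter_add_mem [DecidableEq W] (A : Finset W) (ψ : Module.Dual (ZMod p) W)
    (u : W) [Fintype (LinearMap.ker ψ)] :
    #{k : LinearMap.ker ψ | (k : W) + u ∈ A} = #{a ∈ A | ψ a = ψ u} := by
  refine card_bij (fun k _ => (k : W) + u) (fun k hk => ?_) (fun k _ l _ h => ?_) fun a ha => ?_
  · simp only [mem_filter, mem_univ, true_and] at hk ⊢
    exact ⟨hk, by rw [map_add, LinearMap.mem_ker.mp k.2, zero_add]⟩
  · exact Subtype.ext (add_right_cancel h)
  · obtain ⟨haA, hau⟩ := mem_filter.mp ha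
    exact ⟨⟨a - u, by rw [LinearMap.mem_ker, map_sub, hau, sub_self]⟩, by simpa using haA,
      sub_add_cancel a u⟩

variable [Fintype W]

instance : Finite (Module.Dual (ZMod p) W) :=
  have : Module.Finite (ZMod p) W := .of_finite
  Module.finite_of_finite (ZMod p)

noncomputable instance : Fintype (Module.Dual (ZMod p) W) := .ofFinite _

lemma card_dual : Fintype.card (Module.Dual (ZMod p) W) = Fintype.card W := by
  rw [Module.card_eq_pow_finrank (K := ZMod p), Module.card_eq_pow_finrank (K := ZMod p) (V := W),
    Subspace.dual_finrank_eq]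

lemma sum_dual_stdAddChar [DecidableEq W] (z : W) :
    ∑ ψ : Module.Dual (ZMod p) W, ZMod.stdAddChar (ψ z) =
      if z = 0 then (Fintype.card W : ℂ) else 0 := by
  split_ifs with hz
  · simp [hz, card_dual]
  · obtain ⟨ψ₀, hψ₀⟩ : ∃ ψ₀ : Module.Dual (ZMod p) W, ψ₀ z ≠ 0 := by
      by_contra! h
      exact hz ((Module.forall_dual_apply_eq_zero_iff (ZMod p) z).mp h)
    let e : AddChar (Module.Dual (ZMod p) W) ℂ :=
      ZMod.stdAddChar.compAddMonoidHom (Module.Dual.eval (ZMod p) W z).toAddMonoidHom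
    have he : e ≠ 1 := AddChar.ne_one_iff.mpr ⟨ψ₀, fun h =>
      hψ₀ (ZMod.injective_stdAddChar (h.trans (AddChar.map_zero_eq_one _).symm))⟩
    exact AddChar.sum_eq_zero_of_ne_one he

lemma sum_norm_charSum_sq (A : Finset W) :
    ∑ ψ : Module.Dual (ZMod p) W, ‖charSum A ψ‖ ^ 2 = Fintype.card W * #A := by
  have hsq (ψ : Module.Dual (ZMod p) W) :
      (‖charSum A ψ‖ ^ 2 : ℂ) = ∑ a ∈ A, ∑ b ∈ A, ZMod.stdAddChar (ψ (a - b)) := by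
    rw [← Complex.mul_conj', charSum, map_sum, Finset.sum_mul_sum]
    refine Finset.sum_congr rfl fun a _ => Finset.sum_congr rfl fun b _ => ?_
    rw [← AddChar.map_neg_eq_conj, ← AddChar.map_add_eq_mul, map_sub, sub_eq_add_neg]
  have := calc
    ∑ ψ : Module.Dual (ZMod p) W, (‖charSum A ψ‖ ^ 2 : ℂ)
      = ∑ a ∈ A, ∑ b ∈ A, ∑ ψ : Module.Dual (ZMod p) W, ZMod.stdAddChar (ψ (a - b)) := by
        simp_rw [hsq]; rw [Finset.sum_comm]; simp_rw [Finset.sum_comm (s := A) (t := univ)]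
    _ = Fintype.card W * #A := by
        classical
        simp_rw [sum_dual_stdAddChar, sub_eq_zero]
        simp [mul_comm]
  exact_mod_cast this

lemma sum_stdAddChar_mul_charSum_pow [DecidableEq W] (A : Finset W) (n : ℕ) (x : W) :
    ∑ ψ : Module.Dual (ZMod p) W, ZMod.stdAddChar (ψ (-x)) * charSum A ψ ^ n =
      ∑ y ∈ Fintype.piFinset fun _ : Fin n => A,
        if ∑ i, y i = x then (Fintype.card W : ℂ) else 0 := by
  calc _ = ∑ ψ : Module.Dual (ZMod p) W, ∑ y ∈ Fintype.piFinset fun _ : Fin n => A,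
        ZMod.stdAddChar (ψ (∑ i, y i - x)) := by
        refine sum_congr rfl fun ψ _ => ?_
        rw [charSum, ← Fin.prod_const, prod_univ_sum, mul_sum]
        refine sum_congr rfl fun y _ => ?_
        rw [map_sub, sub_eq_neg_add, ← map_neg, AddChar.map_add_eq_mul, map_sum,
          AddChar.map_sum_eq_prod]
    _ = _ := by
        rw [sum_comm]
        simp_rw [sum_dual_stdAddChar, sub_eq_zero]

lemma mem_nsmul_of_norm_charSum_le {A : Finset W} {n : ℕ} (hn : 2 ≤ n) {M : ℝ} (hM0 : 0 ≤ M)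
    (hM : ∀ ψ : Module.Dual (ZMod p) W, ψ ≠ 0 → ‖charSum A ψ‖ ≤ M)
    (hgap : M ^ (n - 2) * (Fintype.card W * #A) < (#A : ℝ) ^ n) (x : W) :
    x ∈ n • (A : Set W) := by
  classical
  by_contra hx
  have hzero : ∑ ψ : Module.Dual (ZMod p) W, ZMod.stdAddChar (ψ (-x)) * charSum A ψ ^ n = 0 := by
    rw [sum_stdAddChar_mul_charSum_pow]
    refine sum_eq_zero fun y hy => if_neg fun hyx => hx (Set.mem_nsmul_iff_sum.mpr ⟨y, ?_, hyx⟩)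
    simpa using Fintype.mem_piFinset.mp hy
  rw [← add_sum_erase _ _ (mem_univ 0), LinearMap.zero_apply, AddChar.map_zero_eq_one, one_mul,
    charSum_zero] at hzero
  have hbound : (#A : ℝ) ^ n ≤ M ^ (n - 2) * (Fintype.card W * #A) := calc
    (#A : ℝ) ^ n = ‖((#A : ℂ)) ^ n‖ := by simp
    _ = ‖∑ ψ ∈ univ.erase 0, ZMod.stdAddChar (ψ (-x)) * charSum A ψ ^ n‖ := by
        rw [eq_neg_of_add_eq_zero_left hzero, norm_neg]
    _ ≤ ∑ ψ ∈ univ.erase 0, M ^ (n - 2) * ‖charSum A ψ‖ ^ 2 := by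
        refine norm_sum_le_of_le _ fun ψ hψ => ?_
        rw [norm_mul, AddChar.norm_apply, one_mul, norm_pow, ← Nat.sub_add_cancel hn, pow_add,
          Nat.add_sub_cancel]
        exact mul_le_mul_of_nonneg_right
          (pow_le_pow_left₀ (norm_nonneg _) (hM ψ (ne_of_mem_erase hψ)) _) (sq_nonneg _)
    _ ≤ ∑ ψ, M ^ (n - 2) * ‖charSum A ψ‖ ^ 2 :=
        sum_le_sum_of_subset_of_nonneg (erase_subset _ _) fun _ _ _ => by positivity
    _ = M ^ (n - 2) * (Fintype.card W * #A) := by rw [← mul_sum, sum_norm_charSum_sq]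
  exact hgap.not_ge hbound

end Fourier

variable {p : ℕ} [Fact p.Prime]

theorem exists_linearMap_ker_subset_nsmul (hp : 3 ≤ p) {α : ℝ} (hα0 : 0 < α) (hα1 : α ≤ 1)
    (T : ℕ) : ∀ (W : Type*) [AddCommGroup W] [Module (ZMod p) W] [Fintype W] (A : Finset W),
      α * Fintype.card W ≤ #A → (1 - T * (α ^ 2 / 4)) * Fintype.card W ≤ #A →
      ∃ φ : W →ₗ[ZMod p] (Fin T → ZMod p), (LinearMap.ker φ : Set W) ⊆ p • (A : Set W) := by
  induction T with
  | zero =>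
    intro W _ _ _ A _ hA
    have hA : A = univ := eq_univ_of_card A <| le_antisymm (card_le_univ A) <| by
      exact_mod_cast (by simpa using hA : (Fintype.card W : ℝ) ≤ #A)
    exact ⟨0, by simp [hA, Set.nsmul_univ (by omega : p ≠ 0)]⟩
  | succ T ih =>
    intro W _ _ _ A hαA hTA
    classical
    have hW : (0 : ℝ) < Fintype.card W := by exact_mod_cast Fintype.card_pos
    by_cases huniform : ∀ ψ : Module.Dual (ZMod p) W, ψ ≠ 0 →
        ‖charSum A ψ‖ ≤ α ^ 2 / 2 * Fintype.card W
    · exact ⟨0, fun x _ => mem_nsmul_of_norm_charSum_le (by omega) (by positivity) huniform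
        (half_sq_mul_pow_mul_lt_pow hp hα0 hα1 hW hαA) x⟩
    -- otherwise `A` has density increment `α²/4` on a coset of the hyperplane `ker ψ`
    push Not at huniform
    obtain ⟨ψ, hψ, hlarge⟩ := huniform
    obtain ⟨t, ht⟩ := exists_card_fiber_ge A ψ
    obtain ⟨u, rfl⟩ := LinearMap.surjective_of_ne_zero hψ t
    obtain ⟨c, hc⟩ : ∃ c : ℝ, Fintype.card (LinearMap.ker ψ) = c := ⟨_, rfl⟩
    have hc0 : 0 ≤ c := hc ▸ Nat.cast_nonneg _
    have hK : c * p = Fintype.card W := by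
      rw [← hc]
      exact_mod_cast by simpa only [Nat.card_eq_fintype_card] using card_ker_mul_eq hψ
    have hp0 : (0 : ℝ) < p := by exact_mod_cast (by omega : 0 < p)
    rw [← card_filter_add_mem A ψ u] at ht
    have hAp : α * c ≤ #A / p := by rw [le_div_iff₀ hp0, mul_assoc, hK]; exact hαA
    have hTAp : (1 - (T + 1) * (α ^ 2 / 4)) * c ≤ #A / p := by
      rw [le_div_iff₀ hp0, mul_assoc, hK]; exact_mod_cast hTA
    have hinc : α ^ 2 / 4 * c < ‖charSum A ψ‖ / (2 * p) := by
      rw [lt_div_iff₀ (by positivity)]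
      rw [← hK] at hlarge
      linarith [show α ^ 2 / 4 * c * (2 * p) = α ^ 2 / 2 * (c * p) by ring]
    obtain ⟨φ, hφ⟩ := ih (LinearMap.ker ψ) {k | (k : W) + u ∈ A} 
      (by rw [hc]; linarith [mul_nonneg (sq_nonneg α) hc0]) (by rw [hc]; linarith)
    exact exists_ker_subset_nsmul_of_hyperplane (by simpa using hφ)

theorem exists_color_linearMap_ker_subset_nsmul (hp : 3 ≤ p) {W : Type*} [AddCommGroup W]
    [Module (ZMod p) W] [Finite W] {k : ℕ} (c : W → Fin k) :
    ∃ i : Fin k, ∃ φ : W →ₗ[ZMod p] (Fin (4 * k ^ 2) → ZMod p),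
      (LinearMap.ker φ : Set W) ⊆ p • (c ⁻¹' {i}) := by
  classical
  have := Fintype.ofFinite W
  have : Nonempty (Fin k) := ⟨c 0⟩
  have hk : (0 : ℝ) < k := by exact_mod_cast Fin.pos (c 0)
  obtain ⟨i, hi⟩ := Fintype.exists_le_card_fiber_of_nsmul_le_card c
    (b := (k : ℝ)⁻¹ * Fintype.card W) (by simp [hk.ne'])
  obtain ⟨φ, hφ⟩ := exists_linearMap_ker_subset_nsmul hp (inv_pos.mpr hk)
    (inv_le_one_of_one_le₀ (by exact_mod_cast Fin.pos (c 0))) (4 * k ^ 2) W {x | c x = i} hi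
    (by rw [show (1 : ℝ) - ((4 * k ^ 2 : ℕ) : ℝ) * ((k : ℝ)⁻¹ ^ 2 / 4) = 0 by
      push_cast; field_simp; ring, zero_mul]; positivity)
  exact ⟨i, φ, by convert hφ; ext; simp⟩

lemma exists_color_linearMap_supported (hp : 3 ≤ p) {k : ℕ} (c : (ℕ →₀ ZMod p) → Fin k)
    (N : ℕ) : ∃ i : Fin k, ∃ Φ : (ℕ →₀ ZMod p) →ₗ[ZMod p] (Fin (4 * k ^ 2) → ZMod p),
      ∀ g ∈ Finsupp.supported (ZMod p) (ZMod p) (Set.Iio N), Φ g = 0 → g ∈ p • (c ⁻¹' {i}) := by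
  classical
  set V := Finsupp.supported (ZMod p) (ZMod p) (Set.Iio N)
  have : Finite V := .of_equiv _ (Finsupp.supportedEquivFinsupp _).toEquiv.symm
  obtain ⟨i, φ, hφ⟩ := exists_color_linearMap_ker_subset_nsmul hp (c ∘ V.subtype)
  refine ⟨i, φ ∘ₗ Finsupp.restrictDom _ _ _, fun g hg hΦg => ?_⟩
  have hres : Finsupp.restrictDom (ZMod p) (ZMod p) (Set.Iio N) g = ⟨g, hg⟩ :=
    LinearMap.congr_fun (Finsupp.restrictDom_comp_subtype _) ⟨g, hg⟩
  have hg' : g ∈ V.subtype '' (p • (c ∘ V.subtype) ⁻¹' {i}) :=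
    ⟨⟨g, hg⟩, hφ (by rw [SetLike.mem_coe, LinearMap.mem_ker, ← hres]; exact hΦg), rfl⟩
  rw [Set.image_nsmul] at hg'
  exact Set.nsmul_subset_nsmul_left (Set.image_preimage_subset _ _) hg'

theorem exists_color_addMonoidHom_ker_subset_nsmul (hp : 3 ≤ p) {k : ℕ}
    (c : (ℕ →₀ ZMod p) → Fin k) : ∃ (i : Fin k) (d : ℕ) (Φ : (ℕ →₀ ZMod p) →+ (Fin d → ZMod p)),
      ∀ g, Φ g = 0 → g ∈ p • (c ⁻¹' {i}) := by
  choose i Φ hΦ using exists_color_linearMap_supported hp c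
  obtain ⟨i₀, hi₀⟩ := (Filter.hyperfilter ℕ).exists_eventually_eq i
  obtain ⟨Ψ, hΨ⟩ := exists_addMonoidHom_eventually_eq (Filter.hyperfilter ℕ)
    fun N => (Φ N).toAddMonoidHom
  refine ⟨i₀, _, Ψ, fun g hg => ?_⟩
  have hsupp : ∀ᶠ N in Filter.hyperfilter ℕ, g ∈ Finsupp.supported (ZMod p) (ZMod p) (Set.Iio N) :=
    Nat.hyperfilter_le_atTop <| (Filter.eventually_gt_atTop (g.support.sup id)).mono
      fun N hN => (Finsupp.mem_supported _ _).mpr fun m hm => (le_sup (f := id) hm).trans_lt hN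
  obtain ⟨N, hiN, hΦN, hgN⟩ := (hi₀.and ((hΨ g).and hsupp)).exists
  exact hiN ▸ hΦ N g hgN (hΦN.trans hg)

lemma _root_.BohrRecurrent.exists_mem_ker {G : Type*} [AddCommGroup G] {S : Set G}
    (hS : BohrRecurrent S) {d : ℕ} (Φ : G →+ (Fin d → ZMod p)) : ∃ s ∈ S, Φ s = 0 := by
  have hp : 0 < p := (Fact.out : p.Prime).pos
  obtain ⟨s, hs, hsmall⟩ :=
    hS d ((ZMod.toAddCircle.compLeft (Fin d)).comp Φ) (1 / p) (by positivity)
  refine ⟨s, hs, funext fun i => ZMod.toAddCircle_injective p ?_⟩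
  rw [Pi.zero_apply, map_zero]
  refine AddCircle.eq_zero_of_nsmul_eq_zero_of_norm_lt hp ?_ (hsmall i)
  simp [← map_nsmul]

theorem exists_monochromatic_sum_mem (hp : 3 ≤ p) {S : Set (ℕ →₀ ZMod p)} (hS : BohrRecurrent S)
    {β : ℕ → (ℕ →₀ ZMod p)} (hβ : ∀ g, {n | β n = g}.Infinite) {k : ℕ} (c : ℕ → Fin k) :
    ∃ A : Finset ℕ, (#A = p ∧ ∑ n ∈ A, β n ∈ S) ∧ ∃ i, ∀ n ∈ A, c n = i := by
  have hcolor (g) : ∃ i : Fin k, {n | β n = g ∧ c n = i}.Infinite := by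
    by_contra! hfin
    exact hβ g <| (Set.finite_iUnion hfin).subset fun n hn => Set.mem_iUnion.mpr ⟨c n, hn, rfl⟩
  choose cβ hcβ using hcolor
  obtain ⟨i, d, Φ, hΦ⟩ := exists_color_addMonoidHom_ker_subset_nsmul hp cβ
  obtain ⟨s, hsS, hs⟩ := hS.exists_mem_ker Φ
  obtain ⟨y, hy, rfl⟩ := Set.mem_nsmul_iff_sum.mp (hΦ s hs)
  obtain ⟨f, hf, hfy⟩ := exists_injective_forall_mem (fun j => {n | β n = y j ∧ c n = i})
    fun j => hy j ▸ hcβ (y j)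
  refine ⟨univ.map ⟨f, hf⟩, ⟨by simp, ?_⟩, i, ?_⟩
  · simpa [(hfy _).1] using hsS
  · simpa using fun j => (hfy j).2

lemma linearCombination_eFp (β : ℕ → (ℕ →₀ ZMod p)) (A : Finset ℕ) :
    Finsupp.linearCombination (ZMod p) β (eFp p A) = ∑ n ∈ A, β n := by
  simp [eFp, map_sum, Finsupp.linearCombination_single]

lemma colorable_cayleyGraph_eFp {S : Set (ℕ →₀ ZMod p)} {r : ℕ} {f : (ℕ →₀ ZMod p) → Fin r}
    (hf : ∀ a b, f a = f b → b - a ∉ S) (β : ℕ → (ℕ →₀ ZMod p)) {F : Set (Finset ℕ)}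
    (hF : ∀ A ∈ F, ∑ n ∈ A, β n ∈ S) :
    (cayleyGraph {x : ℕ →₀ ZMod p | ∃ A ∈ F, x = eFp p A}).Colorable r := by
  let T := Finsupp.linearCombination (ZMod p) β
  have hT {g g' : ℕ →₀ ZMod p} {A} (hA : A ∈ F) (h : g - g' = eFp p A) : T g - T g' ∈ S := by
    rw [← map_sub, h, linearCombination_eFp]; exact hF A hA
  refine ⟨SimpleGraph.Coloring.mk (fun g => f (T g)) fun {g g'} hadj hfg => ?_⟩
  obtain ⟨-, ⟨A, hA, h⟩ | ⟨A, hA, h⟩⟩ := SimpleGraph.fromRel_adj _ _ _ |>.mp hadj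
  · exact hf _ _ hfg.symm (hT hA h)
  · exact hf _ _ hfg (hT hA h)

end BohrChromatic

/-- Fix an odd prime `p`.  Suppose that for every collection `𝓕` of `p`-element subsets of
`ℕ` such that the hypergraph on `ℕ` with edge set `𝓕` has infinite chromatic number (every
finite coloring of `ℕ` has a monochromatic edge), the Cayley graph
`Cay(𝔽_p^ω, 𝓔(𝓕))` has infinite chromatic number.  Then every Bohr recurrent subset of
`𝔽_p^ω` is a set of chromatic recurrence. -/
theorem stmt_13 (p : ℕ) (hp : p.Prime) (hodd : Odd p)
    (h : ∀ F : Set (Finset ℕ), (∀ A ∈ F, A.card = p) →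
      (∀ (k : ℕ) (c : ℕ → Fin k), ∃ A ∈ F, ∃ i : Fin k, ∀ n ∈ A, c n = i) →
      ∀ n : ℕ, ¬ (cayleyGraph {x : ℕ →₀ ZMod p | ∃ A ∈ F, x = eFp p A}).Colorable n) :
    ∀ S : Set (ℕ →₀ ZMod p), BohrRecurrent S → ChromaticRecurrent S := by
  intro S hS r f
  have : Fact p.Prime := ⟨hp⟩
  have hp3 : 3 ≤ p := by obtain ⟨m, rfl⟩ := hodd; have := hp.two_le; omega
  by_contra! hf
  obtain ⟨β, hβ⟩ := BohrChromatic.exists_infinite_fibers (ℕ →₀ ZMod p)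
  exact h {A | A.card = p ∧ ∑ n ∈ A, β n ∈ S} (fun A hA => hA.1)
    (fun k c => BohrChromatic.exists_monochromatic_sum_mem hp3 hS hβ c) r
    (BohrChromatic.colorable_cayleyGraph_eFp hf β fun A hA => hA.2)
end

section
/- Let 𝒢 be the graph whose vertices are the 2-element subsets of ℤ × ℤ, with two distinct vertices {a, b} and {c, d} joined by an edge if and only if their symmetric difference equals the vertex set {(n, m), (n + e, m), (n, m + e), (n + e, m + e)} of some square with sides parallel to the coordinate axes (n, m ∈ ℤ, e ≥ 1). Then 𝒢 has chromatic number 2; in particular 𝒢 admits a proper coloring with 2 colors and has at least one edge. -/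
open Pointwise

/-- The vertex set `{(n,m), (n+e,m), (n,m+e), (n+e,m+e)}` of an axis-parallel square. -/
def squareVerts (n m e : ℤ) : Finset (ℤ × ℤ) :=
  {(n, m), (n + e, m), (n, m + e), (n + e, m + e)}

/-- The graph whose vertices are the 2-element subsets of `ℤ × ℤ`, two distinct vertices
being adjacent iff their symmetric difference is the vertex set of an axis-parallel
square. -/
def squaresGraph : SimpleGraph {s : Finset (ℤ × ℤ) // s.card = 2} :=
  SimpleGraph.fromRel fun v w =>
    ∃ n m e : ℤ, 1 ≤ e ∧ symmDiff v.1 w.1 = squareVerts n m e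

/-!
If `{a, b} ∆ {c, d}` is the corner set of a square, the two pairs split the four corners into
the two horizontal sides, the two vertical sides, or the two diagonals. Colour a horizontal pair
of length `e` at height `y` by the parity of `⌊y / e⌋` (which is `y / e` in `ℤ`), a vertical
pair of length `e` at abscissa `x` by the parity of `⌊x / e⌋`, and a diagonal pair by the sign
of its slope. Opposite sides of a square of side `e` lie at heights (or abscissas) `m` and
`m + e`, whose quotients by `e` differ by one, and the two diagonals have opposite slopes; so
this is a proper 2-colouring, and any single square provides an edge.
-/

open Finset

def PairColor (p q : ℤ × ℤ) : Prop :=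
  (p.2 = q.2 ∧ Odd (p.2 / |q.1 - p.1|)) ∨ (p.1 = q.1 ∧ Odd (p.1 / |q.2 - p.2|)) ∨
    q.1 - p.1 = p.2 - q.2

lemma pairColor_comm (p q : ℤ × ℤ) : PairColor p q ↔ PairColor q p := by
  unfold PairColor
  rw [abs_sub_comm q.1, abs_sub_comm q.2]
  constructor <;> rintro (⟨h, h'⟩ | ⟨h, h'⟩ | h)
  all_goals first
    | exact Or.inl ⟨h.symm, h ▸ h'⟩
    | exact Or.inr (Or.inl ⟨h.symm, h ▸ h'⟩)
    | exact Or.inr (Or.inr (by omega))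

lemma pairColor_horizontal {e : ℤ} (he : 0 < e) (n m : ℤ) :
    PairColor (n, m) (n + e, m) ↔ Odd (m / e) := by
  simp [PairColor, abs_of_pos he, he.ne']

lemma pairColor_vertical {e : ℤ} (he : 0 < e) (n m : ℤ) :
    PairColor (n, m) (n, m + e) ↔ Odd (n / e) := by
  simp [PairColor, abs_of_pos he, he.ne']

lemma not_pairColor_diagonal {e : ℤ} (he : 0 < e) (n m : ℤ) :
    ¬PairColor (n, m) (n + e, m + e) := by
  simp only [PairColor, add_sub_cancel_left, sub_add_cancel_left]; omega

lemma pairColor_antidiagonal (n m e : ℤ) : PairColor (n, m + e) (n + e, m) := by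
  simp [PairColor]

def VertexColor (s : Finset (ℤ × ℤ)) : Prop :=
  ∀ p ∈ s, ∀ q ∈ s, p ≠ q → PairColor p q

lemma vertexColor_pair {p q : ℤ × ℤ} (hpq : p ≠ q) : VertexColor {p, q} ↔ PairColor p q := by
  simp [VertexColor, hpq, hpq.symm, pairColor_comm q p]

lemma Finset.disjoint_of_card_add_le_card_symmDiff {α : Type*} [DecidableEq α] {s t : Finset α}
    (h : #s + #t ≤ #(symmDiff s t)) : Disjoint s t := by
  have hsub : symmDiff s t ⊆ s ∪ t := symmDiff_le_sup
  have := card_le_card hsub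
  have := card_union_add_card_inter s t
  rw [disjoint_iff_inter_eq_empty, ← card_eq_zero]
  omega

lemma card_squareVerts (n m : ℤ) {e : ℤ} (he : e ≠ 0) : #(squareVerts n m e) = 4 := by
  rw [squareVerts, card_insert_of_notMem, card_insert_of_notMem, card_pair] <;>
    simp [Prod.ext_iff, he]

lemma squaresGraph_adj_iff {v w : {s : Finset (ℤ × ℤ) // #s = 2}} :
    squaresGraph.Adj v w ↔
      ∃ n m e : ℤ, 1 ≤ e ∧ Disjoint v.1 w.1 ∧ v.1 ∪ w.1 = squareVerts n m e := by
  simp only [squaresGraph, SimpleGraph.fromRel_adj, symmDiff_comm w.1, or_self]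
  constructor
  · rintro ⟨-, n, m, e, he, hsq⟩
    have hvw : Disjoint v.1 w.1 := disjoint_of_card_add_le_card_symmDiff <| by
      rw [hsq, card_squareVerts n m (by omega), v.2, w.2]
    rw [hvw.symmDiff_eq_sup] at hsq
    exact ⟨n, m, e, he, hvw, hsq⟩
  · rintro ⟨n, m, e, he, hvw, hsq⟩
    refine ⟨fun hvw' ↦ ?_, n, m, e, he, by rwa [hvw.symmDiff_eq_sup]⟩
    rw [hvw', disjoint_self, bot_eq_empty] at hvw
    simpa [hvw] using w.2

lemma eq_pair_of_disjoint_union_eq_squareVerts {n m e : ℤ} (he : 0 < e) {v w : Finset (ℤ × ℤ)}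
    (hv : #v = 2) (hvw : Disjoint v w) (hsq : v ∪ w = squareVerts n m e) (hnm : (n, m) ∈ v) :
    (v = {(n, m), (n + e, m)} ∧ w = {(n, m + e), (n + e, m + e)}) ∨
      (v = {(n, m), (n, m + e)} ∧ w = {(n + e, m), (n + e, m + e)}) ∨
      (v = {(n, m), (n + e, m + e)} ∧ w = {(n, m + e), (n + e, m)}) := by
  obtain ⟨q, hq, rfl⟩ : ∃ q ≠ (n, m), v = {(n, m), q} := by
    obtain ⟨a, b, hab, rfl⟩ := card_eq_two.mp hv
    rw [mem_insert, mem_singleton] at hnm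
    rcases hnm with rfl | rfl
    · exact ⟨b, hab.symm, rfl⟩
    · exact ⟨a, hab, pair_comm _ _⟩
  have hw : w = squareVerts n m e \ {(n, m), q} := by
    rw [← hsq, union_sdiff_cancel_left hvw]
  have hq_mem : q ∈ squareVerts n m e := hsq ▸ mem_union_left _ (by simp)
  simp only [squareVerts, mem_insert, mem_singleton] at hq_mem
  subst hw
  rcases hq_mem with rfl | rfl | rfl | rfl
  · exact absurd rfl hq
  · exact Or.inl ⟨rfl, by ext; simp [squareVerts, Prod.ext_iff]; omega⟩
  · exact Or.inr <| Or.inl ⟨rfl, by ext; simp [squareVerts, Prod.ext_iff]; omega⟩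
  · exact Or.inr <| Or.inr ⟨rfl, by ext; simp [squareVerts, Prod.ext_iff]; omega⟩

lemma odd_add_ediv_self_iff {m e : ℤ} (he : e ≠ 0) : Odd ((m + e) / e) ↔ ¬Odd (m / e) := by
  rw [Int.add_ediv_of_dvd_right dvd_rfl, Int.ediv_self he, odd_add_one, Int.not_odd_iff_even]

lemma not_vertexColor_iff_of_disjoint_union_eq_squareVerts {n m e : ℤ} (he : 0 < e)
    {v w : Finset (ℤ × ℤ)} (hv : #v = 2) (hw : #w = 2) (hvw : Disjoint v w)
    (hsq : v ∪ w = squareVerts n m e) : ¬(VertexColor v ↔ VertexColor w) := by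
  wlog hnm : (n, m) ∈ v generalizing v w
  · have hnm' : (n, m) ∈ w := by
      have : (n, m) ∈ v ∪ w := hsq ▸ by simp [squareVerts]
      simpa [hnm] using this
    rw [Iff.comm]
    exact this hw hv hvw.symm (union_comm v w ▸ hsq) hnm'
  obtain ⟨rfl, rfl⟩ | ⟨rfl, rfl⟩ | ⟨rfl, rfl⟩ :=
    eq_pair_of_disjoint_union_eq_squareVerts he hv hvw hsq hnm
  · rw [vertexColor_pair (by simp [he.ne']), vertexColor_pair (by simp [he.ne']),
      pairColor_horizontal he, pairColor_horizontal he, odd_add_ediv_self_iff he.ne']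
    exact iff_not_self
  · rw [vertexColor_pair (by simp [he.ne']), vertexColor_pair (by simp [he.ne']),
      pairColor_vertical he, pairColor_vertical he, odd_add_ediv_self_iff he.ne']
    exact iff_not_self
  · rw [vertexColor_pair (by simp [he.ne']), vertexColor_pair (by simp [he.ne'])]
    simp [not_pairColor_diagonal he, pairColor_antidiagonal]

/-- The graph `𝒢` above has chromatic number `2`. -/
theorem stmt_15 : squaresGraph.chromaticNumber = 2 := by
  refine SimpleGraph.chromaticNumber_eq_two_iff.mpr ⟨?_, ?_⟩
  · have hvalid {v w} (hadj : squaresGraph.Adj v w) : VertexColor v.1 ≠ VertexColor w.1 := by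
      obtain ⟨n, m, e, he, hvw, hsq⟩ := squaresGraph_adj_iff.mp hadj
      exact fun h ↦
        not_vertexColor_iff_of_disjoint_union_eq_squareVerts he v.2 w.2 hvw hsq (iff_of_eq h)
    simpa using (SimpleGraph.Coloring.mk _ hvalid).colorable
  · refine SimpleGraph.ne_bot_iff_exists_adj.mpr
      ⟨⟨{(0, 0), (1, 0)}, rfl⟩, ⟨{(0, 1), (1, 1)}, rfl⟩, squaresGraph_adj_iff.mpr ?_⟩
    exact ⟨0, 0, 1, le_rfl, by decide, by decide⟩
end

section
/- Let G be an abelian group and let E ⊆ G. Suppose that every bounded function f : E → ℂ can be uniformly approximated on E by restrictions of trigonometric polynomials; that is, for every ε > 0 there is a trigonometric polynomial p on G with |f(x) − p(x)| ≤ ε for all x ∈ E. Then E is an I₀ set. -/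
open Pointwise

/-!
Approximate `f` (normalised to `‖f‖ ≤ 1` on `E`) within `1/4` on `E` by a trigonometric
polynomial `p`, and truncate `p` radially at height `5/4`. The truncation `(r / max r ‖p‖) • p`
is itself uniformly approximable by trigonometric polynomials, since `‖p‖² = p̄ p` is one and
Weierstrass approximation applies to `s ↦ r / max r √s`. This gives a trigonometric polynomial
bounded by `2` on all of `G` that is within `1/2` of `f` on `E`. Iterating on the doubled
residual writes `f|_E` as a series of trigonometric polynomials with sup norms `O(2⁻ᵏ)` on `G`,
which converges uniformly on `G` to an almost periodic extension of `f|_E`.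
-/

open Polynomial

lemma aeval_star_mul_self_apply {α : Type*} (p : α → ℂ) (Q : ℝ[X]) (a : α) :
    aeval (star p * p) Q a = ((Q.eval (‖p a‖ ^ 2) : ℝ) : ℂ) := by
  have hnorm : (star p * p) a = algebraMap ℝ ℂ (‖p a‖ ^ 2) := by
    simp [Complex.conj_mul']
  have h := aeval_algHom_apply (Pi.evalAlgHom ℝ (fun _ : α => ℂ) a) (star p * p) Q
  rw [Pi.evalAlgHom_apply, hnorm, aeval_algebraMap_apply_eq_algebraMap_eval] at h
  exact h.symm

namespace IsChar

variable {G : Type*} [AddCommGroup G] {χ η : G → ℂ}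

lemma one : IsChar (1 : G → ℂ) :=
  ⟨fun _ => by simp, fun _ _ => by simp⟩

lemma mul (hχ : IsChar χ) (hη : IsChar η) : IsChar (χ * η) :=
  ⟨fun g => by simp [hχ.1 g, hη.1 g],
    fun a b => by simp only [Pi.mul_apply, hχ.2 a b, hη.2 a b]; ring⟩

lemma star (hχ : IsChar χ) : IsChar (star χ) :=
  ⟨fun g => by simp [hχ.1 g], fun a b => by simp [hχ.2 a b]⟩

end IsChar

section TrigPoly

variable {G : Type*} [AddCommGroup G] {p q : G → ℂ}

lemma isTrigPoly_iff_mem_span : IsTrigPoly p ↔ p ∈ Submodule.span ℂ {χ : G → ℂ | IsChar χ} := by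
  rw [Submodule.mem_span_set']
  constructor
  · rintro ⟨n, c, χ, hχ, hp⟩
    exact ⟨n, c, fun i => ⟨χ i, hχ i⟩, funext fun g => by simp [hp g]⟩
  · rintro ⟨n, c, χ, rfl⟩
    exact ⟨n, c, fun i => χ i, fun i => (χ i).2, fun g => by simp⟩

variable (G) in
def trigPolySubalgebra : Subalgebra ℂ (G → ℂ) :=
  (Submodule.span ℂ {χ : G → ℂ | IsChar χ}).toSubalgebra (Submodule.subset_span IsChar.one)
    fun p q hp hq => by
      have hpq := Submodule.mul_mem_mul hp hq
      rw [Submodule.span_mul_span] at hpq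
      refine Submodule.span_le.2 ?_ hpq
      rintro _ ⟨χ, hχ, η, hη, rfl⟩
      exact Submodule.subset_span (IsChar.mul hχ hη)

lemma mem_trigPolySubalgebra : p ∈ trigPolySubalgebra G ↔ IsTrigPoly p := by
  rw [trigPolySubalgebra, Submodule.mem_toSubalgebra, isTrigPoly_iff_mem_span]

namespace IsTrigPoly

lemma mul (hp : IsTrigPoly p) (hq : IsTrigPoly q) : IsTrigPoly (p * q) := by
  rw [← mem_trigPolySubalgebra] at *
  exact Subalgebra.mul_mem _ hp hq

lemma const_mul (c : ℂ) (hp : IsTrigPoly p) : IsTrigPoly fun g => c * p g := by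
  rw [← mem_trigPolySubalgebra] at *
  exact Subalgebra.smul_mem _ hp c

lemma sum {ι : Type*} (s : Finset ι) {u : ι → G → ℂ} (hu : ∀ i ∈ s, IsTrigPoly (u i)) :
    IsTrigPoly fun g => ∑ i ∈ s, u i g := by
  simp_rw [← mem_trigPolySubalgebra] at *
  rw [← Finset.sum_fn]
  exact Subalgebra.sum_mem _ hu

lemma star (hp : IsTrigPoly p) : IsTrigPoly (star p) := by
  obtain ⟨n, c, χ, hχ, hpg⟩ := hp
  exact ⟨n, fun i => Star.star (c i), fun i => Star.star (χ i), fun i => (hχ i).star,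
    fun g => by simp [hpg g]⟩

lemma exists_bound (hp : IsTrigPoly p) : ∃ M, ∀ g, ‖p g‖ ≤ M := by
  obtain ⟨n, c, χ, hχ, hpg⟩ := hp
  refine ⟨∑ i, ‖c i‖, fun g => ?_⟩
  rw [hpg g]
  refine (norm_sum_le _ _).trans_eq (Finset.sum_congr rfl fun i _ => ?_)
  rw [norm_mul, (hχ i).1 g, mul_one]

lemma aeval (hp : IsTrigPoly p) (Q : ℝ[X]) : IsTrigPoly (aeval p Q) := by
  rw [← mem_trigPolySubalgebra] at hp ⊢
  let S := (trigPolySubalgebra G).restrictScalars ℝ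
  have h := (Polynomial.aeval (⟨p, hp⟩ : S) Q).2
  rwa [Polynomial.aeval_subalgebra_coe] at h

lemma exists_near_comp_norm_mul (hp : IsTrigPoly p) (φ : ℝ → ℝ) (hφ : Continuous φ) {η : ℝ}
    (hη : 0 < η) : ∃ t, IsTrigPoly t ∧ ∀ g, ‖t g - φ ‖p g‖ * p g‖ ≤ η := by
  obtain ⟨M, hM⟩ := hp.exists_bound
  have hM0 : 0 ≤ M := (norm_nonneg _).trans (hM 0)
  obtain ⟨Q, hQ⟩ := exists_polynomial_near_of_continuousOn 0 (M ^ 2) (φ ∘ Real.sqrt)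
    (hφ.comp Real.continuous_sqrt).continuousOn (η / (M + 1)) (by positivity)
  refine ⟨Polynomial.aeval (Star.star p * p) Q * p, (hp.star.mul hp).aeval Q |>.mul hp, fun g => ?_⟩
  have hmem : ‖p g‖ ^ 2 ∈ Set.Icc 0 (M ^ 2) :=
    ⟨by positivity, pow_le_pow_left₀ (norm_nonneg _) (hM g) 2⟩
  have hQg : |Q.eval (‖p g‖ ^ 2) - φ ‖p g‖| ≤ η / (M + 1) := by
    simpa [Real.sqrt_sq (norm_nonneg (p g))] using (hQ _ hmem).le
  calc ‖(Polynomial.aeval (Star.star p * p) Q * p) g - φ ‖p g‖ * p g‖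
      = |Q.eval (‖p g‖ ^ 2) - φ ‖p g‖| * ‖p g‖ := by
        rw [Pi.mul_apply, aeval_star_mul_self_apply, ← sub_mul, norm_mul, ← Complex.ofReal_sub,
          Complex.norm_real, Real.norm_eq_abs]
    _ ≤ η / (M + 1) * (M + 1) := by gcongr; linarith [hM g]
    _ = η := div_mul_cancel₀ _ (by linarith)

lemma exists_truncation (hp : IsTrigPoly p) {r η : ℝ} (hr : 0 < r) (hη : 0 < η) :
    ∃ t, IsTrigPoly t ∧ (∀ g, ‖t g‖ ≤ r + η) ∧ ∀ g, ‖p g‖ ≤ r → ‖t g - p g‖ ≤ η := by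
  obtain ⟨t, ht, hpt⟩ := hp.exists_near_comp_norm_mul (fun s => r / max r s)
    (continuous_const.div (continuous_const.max continuous_id) fun s => by positivity) hη
  refine ⟨t, ht, fun g => ?_, fun g hg => by simpa [max_eq_left hg, hr.ne'] using hpt g⟩
  have hmax : 0 < max r ‖p g‖ := lt_max_of_lt_left hr
  have htrunc : ‖(r / max r ‖p g‖ : ℝ) * p g‖ ≤ r := by
    rw [norm_mul, Complex.norm_real, Real.norm_of_nonneg (by positivity), div_mul_eq_mul_div,
      div_le_iff₀ hmax]
    exact mul_le_mul_of_nonneg_left (le_max_right _ _) hr.le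
  calc ‖t g‖ ≤ ‖t g - (r / max r ‖p g‖ : ℝ) * p g‖ + ‖(r / max r ‖p g‖ : ℝ) * p g‖ :=
        norm_le_norm_sub_add _ _
    _ ≤ η + r := add_le_add (hpt g) htrunc
    _ = r + η := add_comm _ _

end IsTrigPoly

end TrigPoly

section I0

variable {G : Type*} [AddCommGroup G]

lemma IsAlmostPeriodic.of_tendstoUniformly {ι : Type*} {l : Filter ι} [l.NeBot]
    {p : ι → G → ℂ} {ψ : G → ℂ} (hp : ∀ i, IsTrigPoly (p i)) (h : TendstoUniformly p ψ l) :
    IsAlmostPeriodic ψ := fun ε hε =>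
  let ⟨i, hi⟩ := (Metric.tendstoUniformly_iff.1 h ε hε).exists
  ⟨p i, hp i, fun g => (dist_eq_norm (ψ g) (p i g) ▸ hi g).le⟩

lemma isAlmostPeriodic_tsum {u : ℕ → G → ℂ} {b : ℕ → ℝ} (hu : ∀ k, IsTrigPoly (u k))
    (hb : Summable b) (hub : ∀ k g, ‖u k g‖ ≤ b k) : IsAlmostPeriodic fun g => ∑' k, u k g :=
  .of_tendstoUniformly (fun _ => IsTrigPoly.sum _ fun k _ => hu k)
    (tendstoUniformly_tsum_nat hb hub)

variable {E : Set G}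

lemma exists_isTrigPoly_halving
    (h : ∀ f : G → ℂ, (∃ C : ℝ, ∀ x ∈ E, ‖f x‖ ≤ C) →
      ∀ ε : ℝ, 0 < ε → ∃ p : G → ℂ, IsTrigPoly p ∧ ∀ x ∈ E, ‖f x - p x‖ ≤ ε)
    {F : G → ℂ} (hF : ∀ x ∈ E, ‖F x‖ ≤ 1) :
    ∃ q, IsTrigPoly q ∧ (∀ g, ‖q g‖ ≤ 2) ∧ ∀ x ∈ E, ‖F x - q x‖ ≤ 1 / 2 := by
  obtain ⟨p, hp, hFp⟩ := h F ⟨1, hF⟩ (1 / 4) (by norm_num)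
  obtain ⟨q, hq, hqG, hqp⟩ := hp.exists_truncation (r := 5 / 4) (η := 1 / 4) (by norm_num)
    (by norm_num)
  refine ⟨q, hq, fun g => (hqG g).trans (by norm_num), fun x hx => ?_⟩
  have hpx : ‖p x‖ ≤ 5 / 4 := by
    linarith [norm_le_insert (F x) (p x), hF x hx, hFp x hx]
  calc ‖F x - q x‖ ≤ ‖F x - p x‖ + ‖q x - p x‖ := by
        rw [norm_sub_rev (q x)]; exact norm_sub_le_norm_sub_add_norm_sub _ _ _
    _ ≤ 1 / 4 + 1 / 4 := add_le_add (hFp x hx) (hqp x hpx)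
    _ = 1 / 2 := by norm_num

lemma exists_hasSum_isTrigPoly_of_halving
    (hstep : ∀ F : G → ℂ, (∀ x ∈ E, ‖F x‖ ≤ 1) →
      ∃ q, IsTrigPoly q ∧ (∀ g, ‖q g‖ ≤ 2) ∧ ∀ x ∈ E, ‖F x - q x‖ ≤ 1 / 2)
    {F : G → ℂ} (hF : ∀ x ∈ E, ‖F x‖ ≤ 1) :
    ∃ q : ℕ → G → ℂ, (∀ k, IsTrigPoly (q k)) ∧ (∀ k g, ‖q k g‖ ≤ 2 * (1 / 2) ^ k) ∧
      ∀ x ∈ E, HasSum (fun k => q k x) (F x) := by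
  let B := {F : G → ℂ // ∀ x ∈ E, ‖F x‖ ≤ 1}
  choose Q hQ hQG hQE using fun F : B => hstep F.1 F.2
  let T : B → B := fun F => ⟨fun g => 2 * (F.1 g - Q F g), fun x hx => by
    rw [norm_mul, Complex.norm_ofNat]; linarith [hQE F x hx]⟩
  let r : ℕ → B := fun n => T^[n] ⟨F, hF⟩
  have hresidual : ∀ n g, F g - ∑ k ∈ Finset.range n, (1 / 2 : ℂ) ^ k * Q (r k) g =
      (1 / 2 : ℂ) ^ n * (r n).1 g := by
    intro n g
    induction n with
    | zero => simp [r]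
    | succ n ih =>
      rw [Finset.sum_range_succ, ← sub_sub, ih, show r (n + 1) = T (r n) from
        Function.iterate_succ_apply' T n _]
      simp only [T]
      ring
  have hbound : ∀ k g, ‖(1 / 2 : ℂ) ^ k * Q (r k) g‖ ≤ 2 * (1 / 2) ^ k := fun k g => by
    rw [norm_mul, norm_pow, norm_div, norm_one, Complex.norm_ofNat, mul_comm]
    gcongr
    exact hQG _ g
  refine ⟨fun k g => (1 / 2 : ℂ) ^ k * Q (r k) g, fun k => (hQ _).const_mul _, hbound,
    fun x hx => ?_⟩
  rw [hasSum_iff_tendsto_nat_of_summable_norm (Summable.of_nonneg_of_le (fun _ => norm_nonneg _)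
    (fun k => hbound k x) (summable_geometric_two.mul_left 2)), tendsto_iff_norm_sub_tendsto_zero]
  refine squeeze_zero (fun _ => norm_nonneg _) (fun n => ?_)
    (tendsto_pow_atTop_nhds_zero_of_lt_one (r := (1 / 2 : ℝ)) (by norm_num) (by norm_num))
  rw [norm_sub_rev, hresidual, norm_mul, norm_pow, norm_div, norm_one, Complex.norm_ofNat]
  exact mul_le_of_le_one_right (by positivity) ((r n).2 x hx)

theorem isI0Set_of_halving
    (hstep : ∀ F : G → ℂ, (∀ x ∈ E, ‖F x‖ ≤ 1) →
      ∃ q, IsTrigPoly q ∧ (∀ g, ‖q g‖ ≤ 2) ∧ ∀ x ∈ E, ‖F x - q x‖ ≤ 1 / 2) :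
    IsI0Set E := by
  rintro f ⟨C₀, hC₀⟩
  set C := max C₀ 1
  have hC : 0 < C := lt_max_of_lt_right one_pos
  obtain ⟨q, hq, hqG, hqE⟩ := exists_hasSum_isTrigPoly_of_halving hstep
    (F := fun g => (C : ℂ)⁻¹ * f g) fun x hx => by
      rw [norm_mul, norm_inv, Complex.norm_real, Real.norm_of_nonneg hC.le, inv_mul_le_iff₀ hC,
        mul_one]
      exact (hC₀ x hx).trans (le_max_left _ _)
  refine ⟨fun g => ∑' k, C * q k g, isAlmostPeriodic_tsum (fun k => (hq k).const_mul _)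
    ((summable_geometric_two.mul_left 2).mul_left C) fun k g => ?_, fun x hx => ?_⟩
  · rw [norm_mul, Complex.norm_real, Real.norm_of_nonneg hC.le]
    exact mul_le_mul_of_nonneg_left (hqG k g) hC.le
  · exact ((hqE x hx).mul_left _).tsum_eq.trans
      (mul_inv_cancel_left₀ (Complex.ofReal_ne_zero.2 hC.ne') _)

end I0

/-- If every bounded `f : E → ℂ` can be uniformly approximated on `E` by restrictions of
trigonometric polynomials, then `E` is an `I₀` set. -/
theorem stmt_17 {G : Type*} [AddCommGroup G] (E : Set G)
    (h : ∀ f : G → ℂ, (∃ C : ℝ, ∀ x ∈ E, ‖f x‖ ≤ C) →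
      ∀ ε : ℝ, 0 < ε → ∃ p : G → ℂ, IsTrigPoly p ∧ ∀ x ∈ E, ‖f x - p x‖ ≤ ε) :
    IsI0Set E :=
  isI0Set_of_halving fun _ hF => exists_isTrigPoly_halving h hF
end

section
/- Every subset of {2^n − 2^m : n, m ∈ ℕ} ⊆ ℤ which is a set of Bohr recurrence is a set of chromatic recurrence. -/
open Pointwise

/-!
Colour the powers of two by `g n := f (2 ^ n)` and choose `B` with `2 * r < 2 ^ B`. For each
residue `j < B` let `θ j` be the real number whose binary expansion carries the `B`-bit block
`2 * g n` at position `n`, for all `n ≡ j [MOD B]`; then `2 ^ n * θ (n % B)` lies modulo `1` in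
the window `[2 * g n, 2 * g n + 1] / 2 ^ B`. The frequency `1 / (2 ^ B - 1)` detects `n % B`,
since `2` has order `B` modulo `2 ^ B - 1`. So if `(2 ^ n - 2 ^ m) * θ` is within `2⁻¹ ^ B` of an
integer for all these frequencies, then `n ≡ m [MOD B]`, and the doubled colours `2 * g n` and
`2 * g m` are too close to differ. Bohr recurrence provides such an `s = 2 ^ n - 2 ^ m` in `S`,
and then `2 ^ m` and `2 ^ n = 2 ^ m + s` have the same colour.
-/

open Set

namespace Real

theorem exists_int_pow_mul_ofDigits_sub_mem_Icc {b : ℕ} (a : ℕ → Fin b) (n : ℕ) :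
    ∃ N : ℤ, (b : ℝ) ^ n * ofDigits a - N ∈ Icc ((a n : ℝ) / b) ((a n + 1) / b) := by
  have hb : (0 : ℝ) < b := by exact_mod_cast Fin.pos (a 0)
  refine ⟨∑ i ∈ Finset.range n, (a i : ℤ) * b ^ (n - 1 - i), ?_⟩
  have hsplit := ofDigits_eq_sum_add_ofDigits a n
  have hhead : (b : ℝ) ^ n * ∑ i ∈ Finset.range n, ofDigitsTerm a i
      = ((∑ i ∈ Finset.range n, (a i : ℤ) * b ^ (n - 1 - i) : ℤ) : ℝ) := by
    push_cast
    rw [Finset.mul_sum]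
    refine Finset.sum_congr rfl fun i hi => ?_
    have hexp : i + 1 + (n - 1 - i) = n := by have := Finset.mem_range.mp hi; omega
    rw [ofDigitsTerm, ← hexp, pow_add]
    field_simp
    rw [hexp, mul_comm]
  have htail := ofDigits_eq_sum_add_ofDigits (fun i => a (i + n)) 1
  simp only [Finset.sum_range_one, ofDigitsTerm, zero_add, pow_one] at htail
  have h0 := ofDigits_nonneg (fun i => a (i + 1 + n))
  have h1 := ofDigits_le_one (fun i => a (i + 1 + n))
  rw [hsplit, mul_add, hhead, add_sub_cancel_left, ← mul_assoc,
    mul_inv_cancel₀ (by positivity), one_mul, htail]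
  constructor
  · rw [div_eq_mul_inv]; nlinarith [inv_pos.mpr hb]
  · rw [add_div, div_eq_mul_inv, one_div]; nlinarith [inv_pos.mpr hb]

theorem exists_int_two_pow_mul_ofDigits_div_sub_mem_Icc {B : ℕ} (a : ℕ → Fin (2 ^ B)) (j l : ℕ) :
    ∃ N : ℤ, (2 : ℝ) ^ (j + B * l) * (ofDigits (fun i => a (j + B * i)) / 2 ^ j) - N ∈
      Icc ((a (j + B * l) : ℝ) / 2 ^ B) ((a (j + B * l) + 1) / 2 ^ B) := by
  obtain ⟨N, hN⟩ := exists_int_pow_mul_ofDigits_sub_mem_Icc (fun i => a (j + B * i)) l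
  refine ⟨N, ?_⟩
  have hpow : (2 : ℝ) ^ (j + B * l) * (ofDigits (fun i => a (j + B * i)) / 2 ^ j) =
      ((2 ^ B : ℕ) : ℝ) ^ l * ofDigits (fun i => a (j + B * i)) := by
    push_cast
    rw [pow_add, pow_mul]
    field_simp
  rw [hpow]
  push_cast at hN ⊢
  exact hN

end Real

theorem Nat.mod_eq_of_two_pow_sub_one_dvd {B n m : ℕ} (hB : 0 < B)
    (h : (2 ^ B - 1 : ℤ) ∣ 2 ^ n - 2 ^ m) : n % B = m % B := by
  have hpow : ∀ k, 2 ^ k ≡ 2 ^ (k % B) [ZMOD 2 ^ B - 1] := fun k =>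
    calc (2 : ℤ) ^ k = 2 ^ (k % B) * (2 ^ B) ^ (k / B) := by
          rw [← pow_mul, ← pow_add, Nat.mod_add_div]
      _ ≡ 2 ^ (k % B) * 1 ^ (k / B) [ZMOD 2 ^ B - 1] :=
          ((Int.modEq_iff_dvd.mpr (by simp)).symm.pow _).mul_left _
      _ = 2 ^ (k % B) := by simp
  have hres : (2 ^ B - 1 : ℤ) ∣ 2 ^ (n % B) - 2 ^ (m % B) :=
    Int.ModEq.dvd (((hpow m).symm.trans (Int.modEq_iff_dvd.mpr h)).trans (hpow n))
  have hlt : ∀ k < B, (1 : ℤ) ≤ 2 ^ k ∧ 2 * 2 ^ k ≤ 2 ^ B := fun k hk =>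
    ⟨one_le_pow₀ (by norm_num), by
      rw [← pow_succ']; exact pow_le_pow_right₀ (by norm_num) hk⟩
  have h1 := hlt _ (Nat.mod_lt n hB)
  have h2 := hlt _ (Nat.mod_lt m hB)
  have heq := Int.eq_zero_of_abs_lt_dvd hres (abs_sub_lt_iff.mpr ⟨by linarith, by linarith⟩)
  have : 2 ^ (n % B) = 2 ^ (m % B) := by exact_mod_cast sub_eq_zero.mp heq
  exact Nat.pow_right_injective le_rfl this

theorem Int.dvd_of_abs_div_sub_lt {M s k : ℤ} (hM : 0 < M)
    (h : |(s : ℝ) / M - k| < 1 / M) : M ∣ s := by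
  have hM' : (0 : ℝ) < M := by exact_mod_cast hM
  have hreal : |((s - k * M : ℤ) : ℝ)| < 1 :=
    calc |((s - k * M : ℤ) : ℝ)| = |((s : ℝ) / M - k) * M| := by push_cast; congr 1; field_simp
      _ = |(s : ℝ) / M - k| * M := by rw [abs_mul, abs_of_pos hM']
      _ < 1 / M * M := by gcongr
      _ = 1 := one_div_mul_cancel hM'.ne'
  have : |s - k * M| < 1 := by exact_mod_cast hreal
  exact ⟨k, by rw [abs_lt] at this; linarith⟩

theorem Fin.eq_of_abs_sub_sub_intCast_lt {r q : ℕ} (hrq : 2 * r ≤ q) {a b : Fin r} {x y : ℝ}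
    (hx : x ∈ Icc (2 * (a : ℝ) / q) ((2 * a + 1) / q))
    (hy : y ∈ Icc (2 * (b : ℝ) / q) ((2 * b + 1) / q)) {k : ℤ} (h : |x - y - k| < 1 / q) :
    a = b := by
  have hq : (0 : ℝ) < q := by have := a.pos; exact_mod_cast (by omega : 0 < q)
  rw [mem_Icc, div_le_iff₀ hq, le_div_iff₀ hq] at hx hy
  have hmul : |(x - y - k) * q| < 1 := by
    rw [abs_mul, abs_of_pos hq]; exact (lt_div_iff₀ hq).mp h
  rw [abs_lt] at hmul
  have hint : |2 * ((a : ℤ) - b) - k * q| < 2 := by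
    have : |((2 * ((a : ℤ) - b) - k * q : ℤ) : ℝ)| < 2 := by
      push_cast; rw [abs_lt]; constructor <;> nlinarith
    exact_mod_cast this
  have ha := a.isLt
  have hb := b.isLt
  rw [abs_lt] at hint
  rcases lt_trichotomy k 0 with hk | hk | hk
  · nlinarith
  · subst hk; omega
  · nlinarith

theorem BohrRecurrent.exists_abs_mul_sub_intCast_lt {S : Set ℤ} (h : BohrRecurrent S) {d : ℕ}
    (θ : Fin d → ℝ) {δ : ℝ} (hδ : 0 < δ) : ∃ s ∈ S, ∀ i, ∃ k : ℤ, |s * θ i - k| < δ := by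
  obtain ⟨s, hs, hsmall⟩ := h d (zmultiplesHom _ fun i => (θ i : UnitAddCircle)) δ hδ
  refine ⟨s, hs, fun i => ⟨round ((s : ℝ) * θ i), ?_⟩⟩
  have := hsmall i
  rwa [zmultiplesHom_apply, Pi.smul_apply, ← AddCircle.coe_zsmul, zsmul_eq_mul,
    UnitAddCircle.norm_eq] at this

theorem exists_frequencies_separating_two_pow {r : ℕ} (g : ℕ → Fin r) :
    ∃ (d : ℕ) (θ : Fin d → ℝ) (δ : ℝ), 0 < δ ∧
      ∀ n m : ℕ, (∀ i, ∃ k : ℤ, |((2 : ℝ) ^ n - 2 ^ m) * θ i - k| < δ) → g n = g m := by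
  set B := r + 1
  have hB : 0 < B := r.succ_pos
  have hrB : 2 * r < 2 ^ B := by
    rw [pow_succ']; exact Nat.mul_lt_mul_of_pos_left r.lt_two_pow_self two_pos
  let a : ℕ → Fin (2 ^ B) := fun k => ⟨2 * g k, by have := (g k).isLt; omega⟩
  refine ⟨B + 1, Fin.cons (1 / (2 ^ B - 1))
    (fun j : Fin B => Real.ofDigits (fun i => a (j + B * i)) / 2 ^ (j : ℕ)), 1 / 2 ^ B,
    by positivity, fun n m hnm => ?_⟩
  have hmod : n % B = m % B := by
    obtain ⟨k, hk⟩ := hnm 0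
    rw [Fin.cons_zero] at hk
    have hM : (0 : ℝ) < 2 ^ B - 1 := by
      have : (2 : ℝ) ≤ 2 ^ B := le_self_pow₀ one_le_two hB.ne'
      linarith
    refine Nat.mod_eq_of_two_pow_sub_one_dvd hB (Int.dvd_of_abs_div_sub_lt (k := k) ?_ ?_)
    · exact_mod_cast hM
    · push_cast
      rw [← mul_one_div]
      exact hk.trans_le (one_div_le_one_div_of_le hM (by linarith))
  obtain ⟨k, hk⟩ := hnm (Fin.succ ⟨n % B, Nat.mod_lt n hB⟩)
  obtain ⟨N, hN⟩ := Real.exists_int_two_pow_mul_ofDigits_div_sub_mem_Icc a (n % B) (n / B)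
  obtain ⟨N', hN'⟩ := Real.exists_int_two_pow_mul_ofDigits_div_sub_mem_Icc a (m % B) (m / B)
  rw [Nat.mod_add_div] at hN
  rw [Nat.mod_add_div, ← hmod] at hN'
  rw [Fin.cons_succ] at hk
  have ha : ∀ k, ((a k : ℕ) : ℝ) = 2 * (g k : ℝ) := fun k => by simp [a]
  rw [ha] at hN hN'
  refine Fin.eq_of_abs_sub_sub_intCast_lt hrB.le (k := k - N + N') (by push_cast; exact hN)
    (by push_cast; exact hN') ?_
  push_cast
  convert hk using 2
  ring

/-- Every subset of `{2^n - 2^m : n, m ∈ ℕ} ⊆ ℤ` which is a set of Bohr recurrence is a set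
of chromatic recurrence. -/
theorem stmt_18 (S : Set ℤ)
    (hS : S ⊆ {x : ℤ | ∃ n m : ℕ, x = 2 ^ n - 2 ^ m})
    (h : BohrRecurrent S) : ChromaticRecurrent S := by
  intro r f
  obtain ⟨d, θ, δ, hδ, hsep⟩ := exists_frequencies_separating_two_pow fun k => f (2 ^ k)
  obtain ⟨s, hs, hsθ⟩ := h.exists_abs_mul_sub_intCast_lt θ hδ
  obtain ⟨n, m, rfl⟩ := hS hs
  exact ⟨2 ^ m, 2 ^ n, (hsep n m (by exact_mod_cast hsθ)).symm, hs⟩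
end
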